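/- arXiv:2406.19491 — 5 statements merged into one kernel-verified Lean document; each statement's English description precedes it below -/
import Mathlib

section
/- Let (n_k) be a strictly increasing sequence of positive integers with n_{k+1} > 2^{n_k} for all k, and let α = ∑_{k=0}^∞ 2^{-n_k}. Then for every sufficiently large k, setting q_k = 2^{n_k} and a_k = 2^{n_k} ∑_{l=0}^k 2^{-n_l}, one has a_k ∈ ℕ and 0 < |q_k α - a_k| < q_k^{-k}. -/
/-!
Subtracting `a_k` from `q_k α` leaves `q_k` times the tail `∑_{l > k} 2^{-n_l}`, which is
positive and, since `n_{k+l} ≥ n_{k+1} + l - 1`, at most twice its first term `2^{-n_{k+1}}`.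
The gap `n_{k+1} > 2^{n_k} > n_k (n_k + 1) ≥ n_k (k + 1)` then pushes `2 q_k 2^{-n_{k+1}}` below
`q_k^{-k}`.
-/

open Finset

theorem Nat.mul_succ_lt_two_pow {m : ℕ} (hm : 5 ≤ m) : m * (m + 1) < 2 ^ m := by
  induction m, hm using Nat.le_induction with
  | base => norm_num
  | succ m _ ih => rw [pow_succ]; nlinarith

section InvTwoPow

variable {n : ℕ → ℕ} (hn : StrictMono n)
include hn

theorem StrictMono.inv_two_pow_le (k : ℕ) :
    ((2:ℝ) ^ n k)⁻¹ ≤ ((2:ℝ) ^ n 0)⁻¹ * (1 / 2) ^ k := by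
  rw [one_div, inv_pow, ← mul_inv, ← pow_add]
  gcongr
  · norm_num
  · simpa [add_comm] using hn.add_le_nat k 0

theorem StrictMono.summable_inv_two_pow : Summable fun k => ((2:ℝ) ^ n k)⁻¹ :=
  (summable_geometric_two.mul_left _).of_nonneg_of_le (fun _ => by positivity) hn.inv_two_pow_le

theorem StrictMono.tsum_inv_two_pow_le : ∑' k, ((2:ℝ) ^ n k)⁻¹ ≤ 2 * ((2:ℝ) ^ n 0)⁻¹ := by
  calc ∑' k, ((2:ℝ) ^ n k)⁻¹ ≤ ∑' k, ((2:ℝ) ^ n 0)⁻¹ * (1 / 2) ^ k :=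
        hn.summable_inv_two_pow.tsum_le_tsum hn.inv_two_pow_le (summable_geometric_two.mul_left _)
    _ = 2 * ((2:ℝ) ^ n 0)⁻¹ := by rw [tsum_mul_left, tsum_geometric_two, mul_comm]

theorem StrictMono.two_pow_mul_tsum_inv_two_pow_sub (k : ℕ) :
    (2:ℝ) ^ n k * ∑' l, ((2:ℝ) ^ n l)⁻¹
        - ((∑ l ∈ range (k + 1), 2 ^ (n k - n l) : ℕ) : ℝ)
      = (2:ℝ) ^ n k * ∑' l, ((2:ℝ) ^ n (l + (k + 1)))⁻¹ := by
  have hpartial : ((∑ l ∈ range (k + 1), 2 ^ (n k - n l) : ℕ) : ℝ)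
      = (2:ℝ) ^ n k * ∑ l ∈ range (k + 1), ((2:ℝ) ^ n l)⁻¹ := by
    push_cast
    rw [mul_sum]
    refine sum_congr rfl fun l hl => ?_
    rw [pow_sub₀ _ two_ne_zero (hn.monotone (Nat.lt_succ_iff.mp (mem_range.mp hl)))]
  rw [hpartial, ← hn.summable_inv_two_pow.sum_add_tsum_nat_add (k + 1)]
  ring

end InvTwoPow

theorem two_pow_mul_two_mul_inv_two_pow_lt {a b k : ℕ} (h : a * k + a + 1 < b) :
    (2:ℝ) ^ a * (2 * ((2:ℝ) ^ b)⁻¹) < ((2:ℝ) ^ a)⁻¹ ^ k := by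
  rw [inv_pow, ← pow_mul, ← mul_assoc, ← pow_succ, ← div_eq_mul_inv,
    div_lt_iff₀ (by positivity), ← div_eq_inv_mul, lt_div_iff₀ (by positivity), ← pow_add]
  exact pow_lt_pow_right₀ one_lt_two (by linarith)

theorem stmt1_general (n : ℕ → ℕ)
    (hgap : ∀ k, 2 ^ n k < n (k + 1))
    (α : ℝ) (hα : α = ∑' k : ℕ, ((2:ℝ) ^ n k)⁻¹) :
    ∃ K : ℕ, ∀ k, K ≤ k →
      0 < |(2:ℝ) ^ n k * α - ((∑ l ∈ Finset.range (k + 1), 2 ^ (n k - n l) : ℕ) : ℝ)| ∧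
      |(2:ℝ) ^ n k * α - ((∑ l ∈ Finset.range (k + 1), 2 ^ (n k - n l) : ℕ) : ℝ)|
        < ((2:ℝ) ^ n k)⁻¹ ^ k := by
  have hn : StrictMono n := strictMono_nat_of_lt_succ fun k => (Nat.lt_two_pow_self).trans (hgap k)
  refine ⟨5, fun k hk => ?_⟩
  have hshift : StrictMono fun l => n (l + (k + 1)) := hn.comp (strictMono_id.add_const _)
  have htail_pos : 0 < ∑' l, ((2:ℝ) ^ n (l + (k + 1)))⁻¹ :=
    hshift.summable_inv_two_pow.tsum_pos (fun _ => by positivity) 0 (by positivity)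
  have hk_le : k ≤ n k := hn.id_le k
  have hexp : n k * k + n k + 1 < n (k + 1) := by
    have := Nat.mul_succ_lt_two_pow (hk.trans hk_le)
    have := hgap k
    nlinarith
  rw [hα, hn.two_pow_mul_tsum_inv_two_pow_sub, abs_of_pos (by positivity)]
  refine ⟨by positivity, ?_⟩
  calc (2:ℝ) ^ n k * ∑' l, ((2:ℝ) ^ n (l + (k + 1)))⁻¹
      ≤ (2:ℝ) ^ n k * (2 * ((2:ℝ) ^ n (k + 1))⁻¹) := by
        gcongr
        simpa using hshift.tsum_inv_two_pow_le
    _ < ((2:ℝ) ^ n k)⁻¹ ^ k := two_pow_mul_two_mul_inv_two_pow_lt hexp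

/-- with `q k = 2 ^ n k` and `a k = ∑_{l ≤ k} 2 ^ (n k - n l)` (a natural
number), for all sufficiently large `k` one has `0 < |q k * α - a k| < (q k)⁻¹ ^ k`. -/
theorem stmt1 (n : ℕ → ℕ) (hmono : StrictMono n) (h0 : 1 ≤ n 0)
    (hgap : ∀ k, 2 ^ n k < n (k + 1))
    (α : ℝ) (hα : α = ∑' k : ℕ, ((2:ℝ) ^ n k)⁻¹) :
    ∃ K : ℕ, ∀ k, K ≤ k →
      0 < |(2:ℝ) ^ n k * α - ((∑ l ∈ Finset.range (k + 1), 2 ^ (n k - n l) : ℕ) : ℝ)| ∧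
      |(2:ℝ) ^ n k * α - ((∑ l ∈ Finset.range (k + 1), 2 ^ (n k - n l) : ℕ) : ℝ)|
        < ((2:ℝ) ^ n k)⁻¹ ^ k :=
  stmt1_general n hgap α hα
end

section
/- Let (n_k) be a strictly increasing sequence of positive integers with n_{k+1} > 2^{n_k} for all k. Then α = ∑_{k=0}^∞ 2^{-n_k} is a Liouville number, and hence transcendental and irrational. -/
open Finset

set_option maxHeartbeats 1000000

private lemma stmt3_aux_sq : ∀ m : ℕ, m * (m + 1) < 2 ^ (m + 1) := by
  intro m
  induction m with
  | zero => norm_num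
  | succ m ih =>
    rcases Nat.lt_or_ge m 2 with h | h
    · interval_cases m <;> norm_num
    · calc (m + 1) * (m + 1 + 1) ≤ (m * (m + 1)) * 2 := by nlinarith
        _ < 2 ^ (m + 1) * 2 := by nlinarith
        _ = 2 ^ (m + 1 + 1) := by ring

private lemma stmt3_add_le (n : ℕ → ℕ) (hmono : StrictMono n) (i j : ℕ) :
    n i + j ≤ n (i + j) := by
  induction j with
  | zero => simp
  | succ j ih =>
    have h := hmono (show i + j < i + j + 1 by omega)
    have he : i + (j + 1) = i + j + 1 := by omega
    rw [he]
    omega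

/-- if `n (k+1) > 2 ^ (n k)` then `α = ∑ 2 ^ (-n k)` is a Liouville
number, hence transcendental and irrational. -/
theorem stmt3 (n : ℕ → ℕ) (hmono : StrictMono n) (h0 : 1 ≤ n 0)
    (hgap : ∀ k, 2 ^ n k < n (k + 1))
    (α : ℝ) (hα : α = ∑' k : ℕ, ((2:ℝ) ^ n k)⁻¹) :
    Liouville α ∧ Transcendental ℤ α ∧ Irrational α := by
  have hsum : Summable (fun i : ℕ => ((2:ℝ) ^ n i)⁻¹) := by
    simpa [one_div] using
      summable_one_div_pow_of_le one_lt_two (fun i => hmono.le_apply)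
  have hLiou : Liouville α := by
    intro p
    set m := n p with hm
    have hpm : p < m := by
      have := stmt3_add_le n hmono 0 p
      simp at this
      omega
    have hb : ((2 ^ n p : ℤ) : ℝ) = (2 : ℝ) ^ n p := by push_cast; ring
    have hfrac : ((∑ i ∈ range (p + 1), 2 ^ (n p - n i) : ℤ) : ℝ) / ((2 ^ n p : ℤ) : ℝ)
        = ∑ i ∈ range (p + 1), ((2:ℝ) ^ n i)⁻¹ := by
      rw [hb]
      push_cast
      rw [sum_div]
      refine Finset.sum_congr rfl fun i hi => ?_
      have hle : n i ≤ n p := hmono.monotone (by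
        have := mem_range.1 hi; omega)
      rw [pow_sub₀ (2:ℝ) two_ne_zero hle]
      rw [mul_comm, mul_div_assoc, div_self (by positivity), mul_one]
    set R : ℝ := ∑' i : ℕ, ((2:ℝ) ^ n (i + (p + 1)))⁻¹ with hR
    have hsumR : Summable (fun i : ℕ => ((2:ℝ) ^ n (i + (p + 1)))⁻¹) :=
      (summable_nat_add_iff (p + 1)).2 hsum
    have hsplit : α = ∑ i ∈ range (p + 1), ((2:ℝ) ^ n i)⁻¹ + R := by
      rw [hα, ← Summable.sum_add_tsum_nat_add (p + 1) hsum]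
    have hRpos : 0 < R := Summable.tsum_pos hsumR (fun _ => by positivity) 0 (by positivity)
    have hRle : R ≤ 2 * ((2:ℝ) ^ n (p + 1))⁻¹ := by
      have hterm : ∀ i : ℕ, ((2:ℝ) ^ n (i + (p + 1)))⁻¹ ≤
          ((2:ℝ) ^ n (p + 1))⁻¹ * (1 / 2) ^ i := by
        intro i
        have h1 : n (p + 1) + i ≤ n (i + (p + 1)) := by
          have := stmt3_add_le n hmono (p + 1) i
          rwa [Nat.add_comm i (p + 1)]
        have h2 : (2:ℝ) ^ (n (p + 1) + i) ≤ (2:ℝ) ^ n (i + (p + 1)) :=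
          pow_le_pow_right₀ one_le_two h1
        have h3 : (0:ℝ) < (2:ℝ) ^ (n (p + 1) + i) := by positivity
        calc ((2:ℝ) ^ n (i + (p + 1)))⁻¹ ≤ ((2:ℝ) ^ (n (p + 1) + i))⁻¹ :=
              inv_anti₀ h3 h2
          _ = ((2:ℝ) ^ n (p + 1))⁻¹ * (1 / 2) ^ i := by
              rw [pow_add, mul_inv, div_pow, one_pow, one_div]
      have hgeo : Summable (fun i : ℕ => ((2:ℝ) ^ n (p + 1))⁻¹ * (1 / 2) ^ i) :=
        summable_geometric_two.mul_left _
      calc R ≤ ∑' i : ℕ, ((2:ℝ) ^ n (p + 1))⁻¹ * (1 / 2) ^ i :=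
            Summable.tsum_le_tsum hterm hsumR hgeo
        _ = ((2:ℝ) ^ n (p + 1))⁻¹ * 2 := by
            rw [tsum_mul_left, tsum_geometric_two]
        _ = 2 * ((2:ℝ) ^ n (p + 1))⁻¹ := by ring
    have hRlt : R < ((2:ℝ) ^ (p * m))⁻¹ := by
      have hgap' : 2 ^ m + 1 ≤ n (p + 1) := hgap p
      have hpm2 : p * m < 2 ^ m := by
        have h1 : p * m ≤ (m - 1) * m := Nat.mul_le_mul_right m (by omega)
        have h2 : (m - 1) * ((m - 1) + 1) < 2 ^ ((m - 1) + 1) := stmt3_aux_sq (m - 1)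
        have hm1 : (m - 1) + 1 = m := by omega
        rw [hm1] at h2
        omega
      have h4 : (2:ℝ) ^ (2 ^ m + 1) ≤ (2:ℝ) ^ n (p + 1) :=
        pow_le_pow_right₀ one_le_two hgap'
      have h5 : 2 * ((2:ℝ) ^ n (p + 1))⁻¹ ≤ ((2:ℝ) ^ (2 ^ m))⁻¹ := by
        have h7 : ((2:ℝ) ^ n (p + 1))⁻¹ ≤ ((2:ℝ) ^ (2 ^ m + 1))⁻¹ :=
          inv_anti₀ (by positivity) h4
        have h8 : 2 * ((2:ℝ) ^ (2 ^ m + 1))⁻¹ = ((2:ℝ) ^ (2 ^ m))⁻¹ := by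
          rw [pow_succ, mul_inv]
          field_simp
        linarith
      have h6 : ((2:ℝ) ^ (2 ^ m))⁻¹ < ((2:ℝ) ^ (p * m))⁻¹ := by
        apply inv_strictAnti₀ (by positivity)
        exact pow_lt_pow_right₀ one_lt_two hpm2
      linarith
    refine ⟨∑ i ∈ range (p + 1), 2 ^ (n p - n i), 2 ^ n p, ?_, ?_, ?_⟩
    · exact_mod_cast Nat.one_lt_two_pow_iff.2 (by omega)
    · rw [hsplit, hfrac]
      intro hcon
      nlinarith
    · rw [hsplit, hfrac, add_sub_cancel_left, abs_of_pos hRpos]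
      have hbp : ((2 ^ n p : ℤ) : ℝ) ^ p = (2:ℝ) ^ (p * m) := by
        rw [hb, ← pow_mul, Nat.mul_comm]
      rw [one_div, hbp]
      exact hRlt
  exact ⟨hLiou, hLiou.transcendental, hLiou.irrational⟩
end

section
/- Let h be a positive integer, k a natural number, and suppose P is a positive integer with P ≡ 1 (mod 2^{n_k}) and P ≤ π where π is a positive integer. Suppose the sequence (n_l) satisfies n_{l} ≥ 4π + l for all l > k and h ≤ π. Then 0 < h(P-1)∑_{l>k} 2^{-n_l} ≤ ∑_{l>k} hπ·2^{-l-3π} < π^{-2} for π sufficiently large, hence ‖hα(P-1)‖ < π^{-2} where α = ∑_{l=0}^∞ 2^{-n_l}. -/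
/-- distance from `x` to the nearest integer -/
noncomputable def distToInt (x : ℝ) : ℝ := |x - round x|

lemma pow4_lt : ∀ m : ℕ, 2 ≤ m → m ^ 4 < 2 ^ (3 * m) := by
  intro m hm
  induction m with
  | zero => omega
  | succ q ih =>
    rcases Nat.lt_or_ge q 2 with hq | hq
    · interval_cases q <;> norm_num
    · have h1 := ih hq
      have h2 : 2 * (q + 1) ≤ 3 * q := by omega
      have h4 : 16 * (q + 1) ^ 4 ≤ 81 * q ^ 4 := by
        calc 16 * (q + 1) ^ 4 = (2 * (q + 1)) ^ 4 := by ring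
        _ ≤ (3 * q) ^ 4 := Nat.pow_le_pow_left h2 4
        _ = 81 * q ^ 4 := by ring
      have key : 16 * (q + 1) ^ 4 < 16 * 2 ^ (3 * (q + 1)) := by
        calc 16 * (q + 1) ^ 4 ≤ 81 * q ^ 4 := h4
        _ < 81 * 2 ^ (3 * q) := by exact Nat.mul_lt_mul_of_le_of_lt (le_refl 81) h1 (by norm_num)
        _ ≤ 128 * 2 ^ (3 * q) := Nat.mul_le_mul_right _ (by norm_num)
        _ = 16 * 2 ^ (3 * (q + 1)) := by rw [Nat.mul_succ, pow_add]; ring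
      exact Nat.lt_of_mul_lt_mul_left key

/-- for sufficiently large `πk`, if `P ≡ 1 (mod 2 ^ n k)`, `1 < P ≤ πk`,
`h ≤ πk` and `n l ≥ 4 πk + l` for `l > k`, then
`0 < h (P-1) ∑_{l>k} 2^{-n l} ≤ ∑_{l>k} h πk 2^{-l-3πk} < πk⁻²`, whence
`‖h α (P - 1)‖ < πk⁻²` for `α = ∑ 2^{-n l}`. -/
theorem stmt6 :
    ∃ Pbound : ℕ, ∀ (n : ℕ → ℕ) (h k P πk : ℕ), StrictMono n → 1 ≤ n 0 →
      1 ≤ h → 1 < P → P ≡ 1 [MOD 2 ^ n k] → P ≤ πk → h ≤ πk →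
      (∀ l, k < l → 4 * πk + l ≤ n l) → Pbound ≤ πk →
      (0 < (h:ℝ) * ((P:ℝ) - 1) * ∑' l : ℕ, ((2:ℝ) ^ n (k + 1 + l))⁻¹ ∧
       (h:ℝ) * ((P:ℝ) - 1) * ∑' l : ℕ, ((2:ℝ) ^ n (k + 1 + l))⁻¹
         ≤ ∑' l : ℕ, (h:ℝ) * (πk:ℝ) * ((2:ℝ) ^ (k + 1 + l + 3 * πk))⁻¹ ∧
       ∑' l : ℕ, (h:ℝ) * (πk:ℝ) * ((2:ℝ) ^ (k + 1 + l + 3 * πk))⁻¹ < ((πk:ℝ))⁻¹ ^ 2 ∧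
       distToInt ((h:ℝ) * (∑' l : ℕ, ((2:ℝ) ^ n l)⁻¹) * ((P:ℝ) - 1)) < ((πk:ℝ))⁻¹ ^ 2) := by
  use 2
  intro n h k P πk hmono hn0 hh hP hmod hPπ hhπ hnl hπ2
  have hπR : (2:ℝ) ≤ (πk:ℝ) := by exact_mod_cast hπ2
  have hπpos : (0:ℝ) < (πk:ℝ) := by linarith
  have hP1 : (0:ℝ) < (P:ℝ) - 1 := by
    have : (1:ℝ) < (P:ℝ) := by exact_mod_cast hP
    linarith
  have hPπR : (P:ℝ) - 1 ≤ (πk:ℝ) := by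
    have : (P:ℝ) ≤ (πk:ℝ) := by exact_mod_cast hPπ
    linarith
  have hhR : (1:ℝ) ≤ (h:ℝ) := by exact_mod_cast hh
  have hhπR : (h:ℝ) ≤ (πk:ℝ) := by exact_mod_cast hhπ
  set f : ℕ → ℝ := fun l => ((2:ℝ) ^ n l)⁻¹ with hf
  -- summability
  have hf_nonneg : ∀ l, (0:ℝ) ≤ f l := fun l => by positivity
  have hf_le : ∀ l, f l ≤ (1/2:ℝ) ^ l := by
    intro l
    rw [hf]
    simp only [one_div, inv_pow]
    exact inv_anti₀ (by positivity)
      (pow_le_pow_right₀ one_le_two hmono.le_apply)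
  have hsum : Summable f :=
    Summable.of_nonneg_of_le hf_nonneg hf_le summable_geometric_two
  have htail : Summable (fun l => f (k + 1 + l)) :=
    hsum.comp_injective (fun a b hab => by omega)
  have hSpos : 0 < ∑' l : ℕ, f (k + 1 + l) :=
    Summable.tsum_pos htail (fun l => hf_nonneg _) 0 (by rw [hf]; positivity)
  set S : ℝ := ∑' l : ℕ, f (k + 1 + l) with hS
  -- part 1
  have part1 : 0 < (h:ℝ) * ((P:ℝ) - 1) * S :=
    mul_pos (mul_pos (by linarith) hP1) hSpos
  -- the comparison series
  set c : ℝ := (h:ℝ) * (πk:ℝ) * ((2:ℝ) ^ (k + 1 + 3 * πk))⁻¹ with hc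
  have hgeq : ∀ l : ℕ,
      (h:ℝ) * (πk:ℝ) * ((2:ℝ) ^ (k + 1 + l + 3 * πk))⁻¹ = c * (1/2:ℝ) ^ l := by
    intro l
    have hpe : (2:ℝ) ^ (k + 1 + l + 3 * πk) = (2:ℝ) ^ (k + 1 + 3 * πk) * 2 ^ l := by
      rw [← pow_add]
      congr 1
      omega
    rw [hpe, mul_inv, hc]
    simp only [one_div, inv_pow]
    ring
  have hg_sum : Summable (fun l : ℕ => (h:ℝ) * (πk:ℝ) * ((2:ℝ) ^ (k + 1 + l + 3 * πk))⁻¹) := by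
    simp only [hgeq]
    exact summable_geometric_two.mul_left _
  have hgsum_eq : (∑' l : ℕ, (h:ℝ) * (πk:ℝ) * ((2:ℝ) ^ (k + 1 + l + 3 * πk))⁻¹) = c * 2 := by
    calc (∑' l : ℕ, (h:ℝ) * (πk:ℝ) * ((2:ℝ) ^ (k + 1 + l + 3 * πk))⁻¹)
        = ∑' l : ℕ, c * (1/2:ℝ) ^ l := by simp only [hgeq]
      _ = c * ∑' l : ℕ, (1/2:ℝ) ^ l := tsum_mul_left
      _ = c * 2 := by rw [tsum_geometric_two]
  -- part 2
  have hterm : ∀ l : ℕ, (h:ℝ) * ((P:ℝ) - 1) * f (k + 1 + l)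
      ≤ (h:ℝ) * (πk:ℝ) * ((2:ℝ) ^ (k + 1 + l + 3 * πk))⁻¹ := by
    intro l
    have hexp : k + 1 + l + 3 * πk ≤ n (k + 1 + l) := by
      have := hnl (k + 1 + l) (by omega)
      omega
    have h1 : (2:ℝ) ^ (k + 1 + l + 3 * πk) ≤ 2 ^ n (k + 1 + l) :=
      pow_le_pow_right₀ one_le_two hexp
    have h2 : f (k + 1 + l) ≤ ((2:ℝ) ^ (k + 1 + l + 3 * πk))⁻¹ := by
      rw [hf]
      exact inv_anti₀ (by positivity) h1
    exact mul_le_mul (mul_le_mul_of_nonneg_left hPπR (by linarith)) h2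
      (hf_nonneg _) (by positivity)
  have part2 : (h:ℝ) * ((P:ℝ) - 1) * S
      ≤ ∑' l : ℕ, (h:ℝ) * (πk:ℝ) * ((2:ℝ) ^ (k + 1 + l + 3 * πk))⁻¹ := by
    rw [hS, ← tsum_mul_left]
    exact Summable.tsum_le_tsum hterm (htail.mul_left _) hg_sum
  -- part 3
  have hnat : 2 * (h * πk) * πk ^ 2 < 2 ^ (k + 1 + 3 * πk) := by
    calc 2 * (h * πk) * πk ^ 2 ≤ 2 * πk ^ 4 := by
          nlinarith [Nat.mul_le_mul_right (πk * πk ^ 2) hhπ]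
      _ < 2 * 2 ^ (3 * πk) :=
          Nat.mul_lt_mul_of_le_of_lt (le_refl 2) (pow4_lt πk hπ2) (by norm_num)
      _ = 2 ^ (1 + 3 * πk) := by rw [pow_add, pow_one]
      _ ≤ 2 ^ (k + 1 + 3 * πk) := Nat.pow_le_pow_right (by norm_num) (by omega)
  have part3 : (∑' l : ℕ, (h:ℝ) * (πk:ℝ) * ((2:ℝ) ^ (k + 1 + l + 3 * πk))⁻¹)
      < ((πk:ℝ))⁻¹ ^ 2 := by
    rw [hgsum_eq]
    have heq : c * 2 = (2 * ((h:ℝ) * (πk:ℝ))) / (2:ℝ) ^ (k + 1 + 3 * πk) := by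
      rw [hc]; ring
    have heq2 : ((πk:ℝ))⁻¹ ^ 2 = 1 / ((πk:ℝ) ^ 2) := by
      rw [inv_pow, inv_eq_one_div]
    rw [heq, heq2, div_lt_div_iff₀ (by positivity) (by positivity)]
    have : ((2 * (h * πk) * πk ^ 2 : ℕ) : ℝ) < ((2 ^ (k + 1 + 3 * πk) : ℕ) : ℝ) := by
      exact_mod_cast hnat
    push_cast at this
    linarith
  refine ⟨part1, part2, part3, ?_⟩
  -- part 4
  have htlt : (h:ℝ) * ((P:ℝ) - 1) * S < ((πk:ℝ))⁻¹ ^ 2 := lt_of_le_of_lt part2 part3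
  -- integrality of the head
  have hdvdk : 2 ^ n k ∣ P - 1 := (Nat.modEq_iff_dvd' (by omega)).mp hmod.symm
  set M : ℕ := ∑ l ∈ Finset.range (k + 1), h * ((P - 1) / 2 ^ n l) with hM
  have hMR : (M:ℝ) = (h:ℝ) * ((P:ℝ) - 1) * ∑ l ∈ Finset.range (k + 1), f l := by
    rw [hM, Nat.cast_sum, Finset.mul_sum]
    refine Finset.sum_congr rfl ?_
    intro l hl
    have hlk : l ≤ k := by
      have := Finset.mem_range.mp hl
      omega
    have hdl : 2 ^ n l ∣ P - 1 :=
      dvd_trans (pow_dvd_pow 2 (hmono.monotone hlk)) hdvdk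
    rw [Nat.cast_mul, Nat.cast_div hdl (by positivity)]
    have hPc : ((P - 1 : ℕ) : ℝ) = (P:ℝ) - 1 := by
      push_cast [Nat.cast_sub (by omega : 1 ≤ P)]
      ring
    rw [hPc, Nat.cast_pow, Nat.cast_ofNat, hf, div_eq_mul_inv]
    ring
  -- split the tsum
  have hsplit : (∑ l ∈ Finset.range (k + 1), f l) + (∑' l : ℕ, f (l + (k + 1)))
      = ∑' l : ℕ, f l := Summable.sum_add_tsum_nat_add (k + 1) hsum
  have htaileq : (∑' l : ℕ, f (l + (k + 1))) = S := by
    rw [hS]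
    apply tsum_congr
    intro l
    congr 1
    omega
  have hx : (h:ℝ) * (∑' l : ℕ, ((2:ℝ) ^ n l)⁻¹) * ((P:ℝ) - 1)
      = (M:ℝ) + (h:ℝ) * ((P:ℝ) - 1) * S := by
    have : (∑' l : ℕ, ((2:ℝ) ^ n l)⁻¹) = (∑ l ∈ Finset.range (k + 1), f l) + S := by
      rw [← hsplit, htaileq]
    rw [this, hMR]
    ring
  rw [hx]
  set t : ℝ := (h:ℝ) * ((P:ℝ) - 1) * S with ht
  have htb : t < 1/2 := by
    have : ((πk:ℝ))⁻¹ ^ 2 ≤ 1/2 := by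
      have h1 : ((πk:ℝ))⁻¹ ≤ 1/2 := by
        rw [inv_le_comm₀ (by linarith) (by norm_num)]
        linarith
      have h2 : (0:ℝ) ≤ ((πk:ℝ))⁻¹ := by positivity
      nlinarith
    linarith
  have hround : round ((M:ℝ) + t) = (M:ℤ) := by
    rw [round_natCast_add]
    have : round t = 0 := by
      rw [round_eq_zero_iff]
      constructor
      · linarith
      · exact htb
    rw [this]
    simp
  unfold distToInt
  rw [hround]
  push_cast
  have : (M:ℝ) + t - (M:ℝ) = t := by ring
  rw [this, abs_of_pos part1]
  exact htlt
end

section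
/- Assume (Shiu's theorem) that for every n ∈ ℕ there exists m = m(n) ∈ ℕ such that the consecutive primes p_{m+1}, ..., p_{m+n} are all ≡ 1 (mod 2^n). Then there exists an irrational real number α such that the sequence (α p_n) of multiples of the primes is not well-distributed modulo 1, in the sense that the Weyl criterion sup_m |N^{-1} ∑_{n=1}^N e(α p_{n+m})| does not tend to 0 as N → ∞. -/
/-- `primeSeq n` is the `n`-th prime, with `primeSeq 1 = 2`. -/
noncomputable def primeSeq (n : ℕ) : ℕ := Nat.nth Nat.Prime (n - 1)

namespace Stmt10

noncomputable def cseq (M : ℕ → ℕ) : ℕ → ℕ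
  | 0 => 1
  | j + 1 =>
      (j + 2) * cseq M j + 8 * cseq M j * primeSeq (M (cseq M j) + cseq M j)
        + cseq M j + 10

variable (M : ℕ → ℕ)

lemma cseq_pos (j : ℕ) : 1 ≤ cseq M j := by
  cases j with
  | zero => simp [cseq]
  | succ j => simp [cseq]

lemma cseq_succ_ge (j : ℕ) :
    (j + 2) * cseq M j + 8 * cseq M j * primeSeq (M (cseq M j) + cseq M j) + 10
      ≤ cseq M (j + 1) := by
  simp [cseq]

lemma cseq_strictMono : StrictMono (cseq M) := by
  apply strictMono_nat_of_lt_succ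
  intro j
  have h := cseq_succ_ge M j
  have h1 := cseq_pos M j
  nlinarith

lemma cseq_add_le (j i : ℕ) : cseq M j + i ≤ cseq M (i + j) := by
  induction i with
  | zero => simp
  | succ i ih =>
      have := cseq_strictMono M (show i + j < i + 1 + j by omega)
      omega

lemma cseq_ge (j : ℕ) : j + 1 ≤ cseq M j := by
  have h := cseq_add_le M 0 j
  have h2 := cseq_pos M 0
  simp at h
  omega

/-- the term of the series -/
noncomputable def term (i : ℕ) : ℝ := (2:ℝ)⁻¹ ^ cseq M i

lemma term_pos (i : ℕ) : 0 < term M i := pow_pos (by norm_num) _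

lemma summable_term : Summable (term M) := by
  apply Summable.of_nonneg_of_le (fun i => (term_pos M i).le)
    (fun i => ?_) (summable_geometric_of_lt_one (by norm_num) (by norm_num : (2:ℝ)⁻¹ < 1))
  exact pow_le_pow_of_le_one (by norm_num) (by norm_num) (by have := cseq_ge M i; omega)

noncomputable def alpha : ℝ := ∑' i, term M i

noncomputable def tail (j : ℕ) : ℝ := ∑' i, term M (i + (j + 1))

lemma alpha_eq (j : ℕ) :
    alpha M = ∑ i ∈ Finset.range (j + 1), term M i + tail M j :=
  (Summable.sum_add_tsum_nat_add (j + 1) (summable_term M)).symm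

lemma tail_pos (j : ℕ) : 0 < tail M j := by
  have hs : Summable (fun i => term M (i + (j + 1))) :=
    (summable_term M).comp_injective (add_left_injective (j + 1))
  exact Summable.tsum_pos hs (fun i => (term_pos M _).le) 0 (term_pos M _)

lemma tail_le (j : ℕ) : tail M j ≤ 2 * (2:ℝ)⁻¹ ^ cseq M (j + 1) := by
  have hs : Summable (fun i => term M (i + (j + 1))) :=
    (summable_term M).comp_injective (add_left_injective (j + 1))
  have hb : ∀ i, term M (i + (j + 1)) ≤ (2:ℝ)⁻¹ ^ cseq M (j+1) * (2:ℝ)⁻¹ ^ i := by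
    intro i
    rw [← pow_add]
    apply pow_le_pow_of_le_one (by norm_num) (by norm_num)
    have := cseq_add_le M (j + 1) i
    omega
  have hsg : Summable (fun i : ℕ => (2:ℝ)⁻¹ ^ cseq M (j+1) * (2:ℝ)⁻¹ ^ i) :=
    (summable_geometric_of_lt_one (by norm_num) (by norm_num)).mul_left _
  calc tail M j ≤ ∑' i : ℕ, (2:ℝ)⁻¹ ^ cseq M (j+1) * (2:ℝ)⁻¹ ^ i :=
        Summable.tsum_le_tsum hb hs hsg
    _ = (2:ℝ)⁻¹ ^ cseq M (j+1) * (1 - 2⁻¹)⁻¹ := by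
        rw [tsum_mul_left, tsum_geometric_of_lt_one (by norm_num) (by norm_num)]
    _ = 2 * (2:ℝ)⁻¹ ^ cseq M (j + 1) := by ring

noncomputable def A (j : ℕ) : ℕ := ∑ i ∈ Finset.range (j + 1), 2 ^ (cseq M j - cseq M i)

lemma A_eq (j : ℕ) :
    (A M j : ℝ) = 2 ^ cseq M j * ∑ i ∈ Finset.range (j + 1), term M i := by
  rw [A, Finset.mul_sum]
  push_cast
  refine Finset.sum_congr rfl (fun i hi => ?_)
  have hij : cseq M i ≤ cseq M j := by
    rcases Finset.mem_range.mp hi with h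
    exact (cseq_strictMono M).monotone (by omega)
  rw [term, pow_sub₀ (2:ℝ) (by norm_num) hij, inv_pow]

lemma liouville_alpha : Liouville (alpha M) := by
  intro n
  refine ⟨(A M n : ℤ), 2 ^ cseq M n, ?_, ?_, ?_⟩
  · exact one_lt_pow₀ (by norm_num) (by have := cseq_pos M n; omega)
  · push_cast
    rw [A_eq, alpha_eq M n]
    have h2 : (0:ℝ) < 2 ^ cseq M n := by positivity
    rw [mul_div_cancel_left₀ _ (ne_of_gt h2)]
    have := tail_pos M n
    intro h
    nlinarith
  · push_cast
    rw [A_eq, alpha_eq M n]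
    have h2 : (0:ℝ) < 2 ^ cseq M n := by positivity
    rw [mul_div_cancel_left₀ _ (ne_of_gt h2)]
    have habs : |∑ i ∈ Finset.range (n + 1), term M i + tail M n
        - ∑ i ∈ Finset.range (n + 1), term M i| = tail M n := by
      rw [add_sub_cancel_left, abs_of_pos (tail_pos M n)]
    rw [habs]
    have hc : n * cseq M n + 2 ≤ cseq M (n + 1) := by
      have h := cseq_succ_ge M n
      have h1 := cseq_pos M n
      nlinarith
    have h3 : tail M n ≤ 2 * (2:ℝ)⁻¹ ^ cseq M (n + 1) := tail_le M n
    have h4 : (2:ℝ)⁻¹ ^ cseq M (n + 1) ≤ (2:ℝ)⁻¹ ^ (n * cseq M n + 2) :=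
      pow_le_pow_of_le_one (by norm_num) (by norm_num) hc
    have h5 : (1:ℝ) / (2 ^ cseq M n) ^ n = (2:ℝ)⁻¹ ^ (n * cseq M n) := by
      rw [← pow_mul, one_div, ← inv_pow, mul_comm]
    rw [h5]
    have : 2 * (2:ℝ)⁻¹ ^ (n * cseq M n + 2) < (2:ℝ)⁻¹ ^ (n * cseq M n) := by
      rw [pow_add]
      have hp : (0:ℝ) < (2:ℝ)⁻¹ ^ (n * cseq M n) := by positivity
      nlinarith
    linarith

lemma irrational_alpha : Irrational (alpha M) := (liouville_alpha M).irrational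

lemma primeSeq_prime (n : ℕ) : (primeSeq n).Prime := Nat.prime_nth_prime _

lemma primeSeq_mono {a b : ℕ} (h : a ≤ b) : primeSeq a ≤ primeSeq b :=
  (Nat.nth_le_nth Nat.infinite_setOf_prime).mpr (by omega)

lemma exp_abs_one (y : ℝ) :
    ‖Complex.exp (2 * Real.pi * Complex.I * (y : ℂ))‖ = 1 := by
  rw [show (2 * (Real.pi:ℂ) * Complex.I * (y:ℂ)) = ((2 * Real.pi * y : ℝ) : ℂ) * Complex.I by
    push_cast; ring, Complex.norm_exp_ofReal_mul_I]

lemma exp_re_eq (y : ℝ) :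
    (Complex.exp (2 * Real.pi * Complex.I * (y : ℂ))).re = Real.cos (2 * Real.pi * y) := by
  rw [show (2 * (Real.pi:ℂ) * Complex.I * (y:ℂ)) = ((2 * Real.pi * y : ℝ) : ℂ) * Complex.I by
    push_cast; ring, Complex.exp_ofReal_mul_I_re]

lemma exp_helper (x y : ℝ) (k : ℕ) :
    Complex.exp (2 * Real.pi * Complex.I * ((x + (y + (k : ℝ)) : ℝ) : ℂ)) =
      Complex.exp (2 * Real.pi * Complex.I * (x : ℂ)) *
        Complex.exp (2 * Real.pi * Complex.I * (y : ℂ)) := by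
  push_cast
  rw [mul_add, Complex.exp_add, mul_add, Complex.exp_add]
  rw [show (2 * (Real.pi:ℂ) * Complex.I * (k:ℂ)) = (k:ℂ) * (2 * Real.pi * Complex.I) by ring]
  rw [show ((k:ℕ):ℂ) = ((k:ℤ):ℂ) by push_cast; ring, Complex.exp_int_mul_two_pi_mul_I, mul_one]

lemma f_le_one (α : ℝ) (N m : ℕ) :
    ‖(N:ℂ)⁻¹ * ∑ n ∈ Finset.Icc 1 N,
      Complex.exp (2 * Real.pi * Complex.I * ((α * primeSeq (n + m) : ℝ) : ℂ))‖ ≤ 1 := by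
  rw [norm_mul, norm_inv, Complex.norm_natCast]
  have h1 : ‖∑ n ∈ Finset.Icc 1 N,
      Complex.exp (2 * Real.pi * Complex.I * ((α * primeSeq (n + m) : ℝ) : ℂ))‖ ≤ N := by
    calc _ ≤ ∑ n ∈ Finset.Icc 1 N, ‖
          (Complex.exp (2 * Real.pi * Complex.I * ((α * primeSeq (n + m) : ℝ) : ℂ)))‖ :=
        norm_sum_le _ _
      _ = ∑ n ∈ Finset.Icc 1 N, 1 := Finset.sum_congr rfl (fun n _ => exp_abs_one _)
      _ ≤ N := by simp [Nat.card_Icc]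
  rcases Nat.eq_zero_or_pos N with h | h
  · simp [h]
  · have hN : (0:ℝ) < N := by exact_mod_cast h
    calc (N:ℝ)⁻¹ * _ ≤ (N:ℝ)⁻¹ * N :=
        mul_le_mul_of_nonneg_left h1 (by positivity)
      _ = 1 := inv_mul_cancel₀ (ne_of_gt hN)

lemma key (j : ℕ)
    (hM : ∀ i, 1 ≤ i → i ≤ cseq M j →
      primeSeq (M (cseq M j) + i) ≡ 1 [MOD 2 ^ cseq M j]) :
    (1/2 : ℝ) ≤ ‖((cseq M j : ℕ) : ℂ)⁻¹ * ∑ n ∈ Finset.Icc 1 (cseq M j),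
      Complex.exp (2 * Real.pi * Complex.I *
        ((alpha M * primeSeq (n + M (cseq M j)) : ℝ) : ℂ))‖ := by
  set N := cseq M j with hNdef
  set m := M N with hmdef
  set P := primeSeq (m + N) with hPdef
  have hN1 : 1 ≤ N := cseq_pos M j
  have hP2 : 2 ≤ P := (primeSeq_prime _).two_le
  -- the multiplier t n
  set t : ℕ → ℕ := fun n => (primeSeq (n + m) - 1) / 2 ^ N with htdef
  have hpt : ∀ n ∈ Finset.Icc 1 N, primeSeq (n + m) = 1 + 2 ^ N * t n ∧ t n ≤ P := by
    intro n hn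
    rcases Finset.mem_Icc.mp hn with ⟨h1, h2⟩
    have hmod : primeSeq (n + m) ≡ 1 [MOD 2 ^ N] := by
      rw [Nat.add_comm]; exact hM n h1 h2
    have hple : 1 ≤ primeSeq (n + m) := (primeSeq_prime _).one_lt.le
    have hdvd : 2 ^ N ∣ primeSeq (n + m) - 1 := (Nat.modEq_iff_dvd' hple).mp hmod.symm
    have heq : 2 ^ N * t n = primeSeq (n + m) - 1 := by
      rw [htdef]; exact Nat.mul_div_cancel' hdvd
    have hle : primeSeq (n + m) ≤ P := primeSeq_mono (by omega)
    have h2N : 1 ≤ 2 ^ N := Nat.one_le_two_pow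
    constructor
    · omega
    · have h0 : t n ≤ 2 ^ N * t n := Nat.le_mul_of_pos_left _ (by positivity)
      omega
  -- θ
  set θ : ℝ := 2 ^ N * tail M j with hθdef
  have hθpos : 0 < θ := by
    have := tail_pos M j
    positivity
  have hAθ : (A M j : ℝ) + θ = 2 ^ N * alpha M := by
    rw [alpha_eq M j, A_eq M j, hθdef]; ring
  -- bound on θ
  have hGge : N + 1 + 8 * N * P ≤ cseq M (j + 1) := by
    have h := cseq_succ_ge M j
    rw [← hNdef, ← hmdef, ← hPdef] at h
    nlinarith
  have hθle : θ ≤ (2:ℝ)⁻¹ ^ (8 * N * P) := by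
    have h1 : tail M j ≤ 2 * (2:ℝ)⁻¹ ^ cseq M (j + 1) := tail_le M j
    have h2 : (2:ℝ)⁻¹ ^ cseq M (j + 1) ≤ (2:ℝ)⁻¹ ^ (N + 1 + 8 * N * P) :=
      pow_le_pow_of_le_one (by norm_num) (by norm_num) hGge
    have h3 : (2:ℝ) ^ N * (2 * (2:ℝ)⁻¹ ^ (N + 1 + 8 * N * P)) = (2:ℝ)⁻¹ ^ (8 * N * P) := by
      have h5 : (2:ℝ) ^ N * (2⁻¹:ℝ) ^ N = 1 := by rw [← mul_pow]; norm_num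
      rw [pow_add, pow_add, pow_one]
      linear_combination (2 * (2:ℝ)⁻¹ * (2:ℝ)⁻¹ ^ (8 * N * P)) * h5
    have h4 : (0:ℝ) < 2 ^ N := by positivity
    calc θ ≤ 2 ^ N * (2 * (2:ℝ)⁻¹ ^ cseq M (j + 1)) := by
          rw [hθdef]; exact mul_le_mul_of_nonneg_left h1 h4.le
      _ ≤ 2 ^ N * (2 * (2:ℝ)⁻¹ ^ (N + 1 + 8 * N * P)) := by nlinarith
      _ = (2:ℝ)⁻¹ ^ (8 * N * P) := h3
  have hθP : θ * P ≤ 1 / (8 * N) := by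
    set K := 8 * N * P with hK
    have hKle : (K : ℝ) ≤ 2 ^ K := by
      exact_mod_cast (Nat.lt_two_pow_self (n := K)).le
    have h2K : (0:ℝ) < 2 ^ K := by positivity
    have hNpos : (0:ℝ) < N := by exact_mod_cast hN1
    have hPpos : (0:ℝ) < P := by exact_mod_cast (by omega : 0 < P)
    have hKcast : (K:ℝ) = 8 * N * P := by rw [hK]; push_cast; ring
    rw [le_div_iff₀ (by positivity)]
    calc θ * P * (8 * N) ≤ (2:ℝ)⁻¹ ^ K * P * (8 * N) := by nlinarith
      _ = ((2:ℝ) ^ K)⁻¹ * (8 * N * P) := by rw [inv_pow]; ring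
      _ ≤ ((2:ℝ) ^ K)⁻¹ * 2 ^ K := by
          rw [← hKcast]; exact mul_le_mul_of_nonneg_left hKle (by positivity)
      _ = 1 := inv_mul_cancel₀ (ne_of_gt h2K)
  -- per-term bound for θ * t n
  have hθt : ∀ n ∈ Finset.Icc 1 N, 0 ≤ θ * t n ∧ θ * t n ≤ 1 / 8 := by
    intro n hn
    have hnt := (hpt n hn).2
    have htcast : (t n : ℝ) ≤ P := by exact_mod_cast hnt
    have ht0 : (0:ℝ) ≤ t n := by positivity
    constructor
    · positivity
    · have h1 : θ * t n ≤ θ * P := mul_le_mul_of_nonneg_left htcast hθpos.le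
      have hNpos : (1:ℝ) ≤ N := by exact_mod_cast hN1
      have : (1:ℝ) / (8 * N) ≤ 1 / 8 := by
        apply div_le_div_of_nonneg_left (by norm_num) (by norm_num) (by nlinarith)
      linarith
  -- rewrite the sum
  have hsum : ∑ n ∈ Finset.Icc 1 N, Complex.exp (2 * Real.pi * Complex.I *
        ((alpha M * primeSeq (n + m) : ℝ) : ℂ)) =
      Complex.exp (2 * Real.pi * Complex.I * ((alpha M : ℝ) : ℂ)) *
        ∑ n ∈ Finset.Icc 1 N, Complex.exp (2 * Real.pi * Complex.I *
          ((θ * t n : ℝ) : ℂ)) := by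
    rw [Finset.mul_sum]
    refine Finset.sum_congr rfl (fun n hn => ?_)
    have hp := (hpt n hn).1
    have hreal : (alpha M * primeSeq (n + m) : ℝ) =
        alpha M + (θ * t n + ((A M j * t n : ℕ) : ℝ)) := by
      rw [hp]
      push_cast
      linear_combination (t n : ℝ) * hAθ.symm
    rw [hreal]
    exact exp_helper (alpha M) (θ * t n) (A M j * t n)
  rw [hsum]
  -- lower bound the inner sum via real parts
  have hre : (N : ℝ) * (1/2) ≤ ‖∑ n ∈ Finset.Icc 1 N,
      Complex.exp (2 * Real.pi * Complex.I * ((θ * t n : ℝ) : ℂ))‖ := by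
    have h1 : (N : ℝ) * (1/2) ≤ (∑ n ∈ Finset.Icc 1 N,
        Complex.exp (2 * Real.pi * Complex.I * ((θ * t n : ℝ) : ℂ))).re := by
      rw [Complex.re_sum]
      have h2 : ∀ n ∈ Finset.Icc 1 N,
          (1/2 : ℝ) ≤ (Complex.exp (2 * Real.pi * Complex.I * ((θ * t n : ℝ) : ℂ))).re := by
        intro n hn
        rw [exp_re_eq]
        rcases hθt n hn with ⟨h0, h8⟩
        have hpi4 : Real.pi ≤ 4 := Real.pi_le_four
        have hpi0 : 0 < Real.pi := Real.pi_pos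
        have hx0 : 0 ≤ 2 * Real.pi * (θ * t n) := by positivity
        have hx1 : 2 * Real.pi * (θ * t n) ≤ 1 := by nlinarith
        have := Real.one_sub_sq_div_two_le_cos (x := 2 * Real.pi * (θ * t n))
        nlinarith
      calc (N:ℝ) * (1/2) = ∑ _n ∈ Finset.Icc 1 N, (1/2 : ℝ) := by
            rw [Finset.sum_const, Nat.card_Icc]
            simp
        _ ≤ _ := Finset.sum_le_sum h2
    exact le_trans h1 (Complex.re_le_norm _)
  -- assemble
  rw [norm_mul, norm_mul, norm_inv, Complex.norm_natCast, exp_abs_one]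
  have hNpos : (0:ℝ) < N := by exact_mod_cast hN1
  rw [one_mul]
  calc (1/2 : ℝ) = (N:ℝ)⁻¹ * ((N:ℝ) * (1/2)) := by field_simp
    _ ≤ (N:ℝ)⁻¹ * ‖∑ n ∈ Finset.Icc 1 N,
        Complex.exp (2 * Real.pi * Complex.I * ((θ * t n : ℝ) : ℂ))‖ :=
      mul_le_mul_of_nonneg_left hre (by positivity)

end Stmt10

/-- assuming Shiu's theorem on strings of congruent primes, there is an
irrational `α` such that `(α p_n)` is not well-distributed mod 1: the Weyl criterion
`sup_m |N⁻¹ ∑_{n=1}^N e(α p_{n+m})| → 0` fails. -/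
theorem stmt10
    (hShiu : ∀ n : ℕ, ∃ m : ℕ, ∀ i, 1 ≤ i → i ≤ n →
      primeSeq (m + i) ≡ 1 [MOD 2 ^ n]) :
    ∃ α : ℝ, Irrational α ∧
      ¬ Filter.Tendsto (fun N : ℕ => ⨆ m : ℕ,
          ‖(N:ℂ)⁻¹ * ∑ n ∈ Finset.Icc 1 N,
            Complex.exp (2 * Real.pi * Complex.I * (α * primeSeq (n + m) : ℝ))‖)
        Filter.atTop (nhds 0) := by
  classical
  set M : ℕ → ℕ := fun n => (hShiu n).choose with hMdef
  have hMspec : ∀ n, ∀ i, 1 ≤ i → i ≤ n → primeSeq (M n + i) ≡ 1 [MOD 2 ^ n] :=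
    fun n => (hShiu n).choose_spec
  refine ⟨Stmt10.alpha M, Stmt10.irrational_alpha M, ?_⟩
  intro h
  have h2 := h.eventually (gt_mem_nhds (by norm_num : (0:ℝ) < 1/2))
  rw [Filter.eventually_atTop] at h2
  obtain ⟨N0, hN0⟩ := h2
  have hj : N0 ≤ Stmt10.cseq M N0 := by have := Stmt10.cseq_ge M N0; omega
  have hlt := hN0 (Stmt10.cseq M N0) hj
  have hkey := Stmt10.key M N0 (hMspec (Stmt10.cseq M N0))
  have hbdd : BddAbove (Set.range fun m : ℕ =>
      ‖((Stmt10.cseq M N0 : ℕ) : ℂ)⁻¹ *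
        ∑ n ∈ Finset.Icc 1 (Stmt10.cseq M N0),
          Complex.exp (2 * Real.pi * Complex.I *
            ((Stmt10.alpha M * primeSeq (n + m) : ℝ) : ℂ))‖) :=
    ⟨1, by rintro x ⟨m, rfl⟩; exact Stmt10.f_le_one _ _ _⟩
  have hsup := le_ciSup hbdd (M (Stmt10.cseq M N0))
  have := le_trans hkey hsup
  linarith
end

section
/- For each positive integer h and each sufficiently large k (depending on h), one has ‖hα(p_{i+m_k} - 1)‖ < π_k^{-2} for all 1 ≤ i ≤ n_k, where α, (n_k), (m_k), (π_k) are as in the paper's construction. -/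
set_option maxHeartbeats 1000000


lemma pow_ineq : ∀ n : ℕ, 2 ≤ n → 2 * n ^ 4 < 16 ^ n := by
  intro n hn
  induction n with
  | zero => omega
  | succ k ih =>
    rcases Nat.lt_or_ge k 2 with hk | hk
    · interval_cases k <;> norm_num
    · have h1 := ih hk
      have h2 : (k+1)^4 ≤ (2*k)^4 := Nat.pow_le_pow_left (by omega) 4
      have h3 : (2*k)^4 = 16 * k^4 := by ring
      calc 2 * (k+1)^4 ≤ 2 * (16 * k^4) := by omega
        _ = 16 * (2 * k^4) := by ring
        _ < 16 * 16^k := by omega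
        _ = 16^(k+1) := by ring

lemma primeSeq_two_le (j : ℕ) : 2 ≤ primeSeq j := by
  have := Nat.add_two_le_nth_prime (j - 1); unfold primeSeq; omega

lemma primeSeq_ge (j : ℕ) : j + 1 ≤ primeSeq j := by
  have := Nat.add_two_le_nth_prime (j - 1); unfold primeSeq; omega

lemma primeSeq_mono {a b : ℕ} (hab : a ≤ b) : primeSeq a ≤ primeSeq b := by
  unfold primeSeq
  exact (Nat.nth_le_nth Nat.infinite_setOf_prime).mpr (by omega)


/-- with the paper's construction (Shiu strings assumed,
`m_k = m (n_k)`, `π_k = p_{m_k + n_k}`, `n_{k+1} = 4 π_k`,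
`α = ∑ 2 ^ (-n_k)`), for every `h ≥ 1` and all sufficiently large `k`,
`‖h α (p_{i + m_k} - 1)‖ < π_k⁻²` for all `1 ≤ i ≤ n_k`. -/
theorem stmt19 (m : ℕ → ℕ)
    (hShiu : ∀ n : ℕ, ∀ i, 1 ≤ i → i ≤ n → primeSeq (m n + i) ≡ 1 [MOD 2 ^ n])
    (nseq : ℕ → ℕ) (h0 : nseq 0 = 1)
    (hrec : ∀ k, nseq (k + 1) = 4 * primeSeq (m (nseq k) + nseq k))
    (α : ℝ) (hα : α = ∑' k : ℕ, ((2:ℝ) ^ nseq k)⁻¹) :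
    ∀ h : ℕ, 1 ≤ h → ∃ K : ℕ, ∀ k, K ≤ k → ∀ i, 1 ≤ i → i ≤ nseq k →
      distToInt ((h:ℝ) * α * ((primeSeq (i + m (nseq k)) : ℝ) - 1))
        < ((primeSeq (m (nseq k) + nseq k) : ℝ))⁻¹ ^ 2 := by
  -- basic facts about nseq
  have hmono : StrictMono nseq := by
    apply strictMono_nat_of_lt_succ
    intro k
    rw [hrec k]
    have h1 := primeSeq_ge (m (nseq k) + nseq k)
    omega
  have hge : ∀ k, k ≤ nseq k := fun k => hmono.le_apply
  -- summability
  have hsum : Summable (fun l : ℕ => ((2:ℝ) ^ nseq l)⁻¹) := by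
    have hle : ∀ l : ℕ, ((2:ℝ) ^ nseq l)⁻¹ ≤ ((1:ℝ)/2) ^ l := by
      intro l
      rw [div_pow, one_pow, one_div]
      apply inv_anti₀ (by positivity)
      exact pow_le_pow_right₀ (by norm_num) (hge l)
    exact Summable.of_nonneg_of_le (fun l => by positivity) hle summable_geometric_two
  intro h hh
  refine ⟨h, fun k hk i hi1 hi2 => ?_⟩
  set n := nseq k with hn
  set p := primeSeq (i + m n) with hp
  set P := primeSeq (m n + n) with hPdef
  have hP2 : 2 ≤ P := primeSeq_two_le _
  have hp2 : 2 ≤ p := primeSeq_two_le _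
  have hpP : p ≤ P := primeSeq_mono (by omega)
  have hPbig : h + 1 ≤ P := by
    have h1 := primeSeq_ge (m n + n)
    have h2 := hge k
    omega
  -- divisibility
  have hdvd : ∀ l, l ≤ k → 2 ^ nseq l ∣ p - 1 := by
    intro l hl
    have h1 : p ≡ 1 [MOD 2 ^ n] := by
      rw [hp, Nat.add_comm]; exact hShiu n i hi1 hi2
    have h2 : 2 ^ n ∣ p - 1 := (Nat.modEq_iff_dvd' (by omega)).mp h1.symm
    exact dvd_trans (pow_dvd_pow 2 (hmono.monotone hl)) h2
  -- split α
  have hsplit : α = (∑ l ∈ Finset.range (k+1), ((2:ℝ) ^ nseq l)⁻¹)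
      + ∑' l : ℕ, ((2:ℝ) ^ nseq (l + (k+1)))⁻¹ := by
    rw [hα, ← Summable.sum_add_tsum_nat_add (k+1) hsum]
  set A := ∑ l ∈ Finset.range (k+1), ((2:ℝ) ^ nseq l)⁻¹ with hA
  set T := ∑' l : ℕ, ((2:ℝ) ^ nseq (l + (k+1)))⁻¹ with hT
  -- tail bound
  have hTsum : Summable (fun l : ℕ => ((2:ℝ) ^ nseq (l + (k+1)))⁻¹) :=
    (summable_nat_add_iff (k+1)).mpr hsum
  have hTnonneg : 0 ≤ T := tsum_nonneg (fun l => by positivity)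
  have hnk1 : nseq (k+1) = 4 * P := hrec k
  have hTle : T ≤ 2 * ((2:ℝ) ^ (4*P))⁻¹ := by
    have hle : ∀ l : ℕ, ((2:ℝ) ^ nseq (l + (k+1)))⁻¹ ≤ ((2:ℝ)^(4*P))⁻¹ * ((1:ℝ)/2)^l := by
      intro l
      have h1 : 4*P + l ≤ nseq (l + (k+1)) := by
        have h2 : nseq (k+1) + l ≤ nseq (l + (k+1)) := by
          have := (hmono.monotone (a := k+1) (b := l+(k+1)) (by omega))
          have h3 : ∀ j : ℕ, nseq (k+1) + j ≤ nseq (j + (k+1)) := by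
            intro j
            induction j with
            | zero => simp
            | succ a ih =>
              have := hmono (a := a + (k+1)) (b := a + 1 + (k+1)) (by omega)
              omega
          exact h3 l
        omega
      rw [div_pow, one_pow, one_div, ← mul_inv, ← pow_add]
      apply inv_anti₀ (by positivity)
      exact pow_le_pow_right₀ (by norm_num) h1
    calc T ≤ ∑' l : ℕ, ((2:ℝ)^(4*P))⁻¹ * ((1:ℝ)/2)^l :=
          Summable.tsum_le_tsum hle hTsum (Summable.mul_left _ summable_geometric_two)
      _ = ((2:ℝ)^(4*P))⁻¹ * 2 := by rw [tsum_mul_left, tsum_geometric_two]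
      _ = 2 * ((2:ℝ) ^ (4*P))⁻¹ := by ring
  -- integer part
  have hpcast : ((p:ℝ) - 1) = ((p - 1 : ℕ) : ℝ) := by
    have : (1:ℕ) ≤ p := by omega
    push_cast [this]; ring
  set c : ℕ := ∑ l ∈ Finset.range (k+1), h * ((p - 1) / 2 ^ nseq l) with hc
  have hint : (h:ℝ) * A * ((p:ℝ) - 1) = (c:ℝ) := by
    rw [hpcast, hc, hA, Nat.cast_sum, Finset.mul_sum, Finset.sum_mul]
    apply Finset.sum_congr rfl
    intro l hl
    have hdl := hdvd l (by simpa using Nat.lt_succ_iff.mp (Finset.mem_range.mp hl))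
    rw [Nat.cast_mul, Nat.cast_div hdl (by positivity)]
    push_cast
    field_simp
  -- the quantity
  have hexpr : (h:ℝ) * α * ((p:ℝ) - 1) = (c:ℝ) + (h:ℝ) * T * ((p:ℝ) - 1) := by
    rw [hsplit, ← hint]; ring
  set x : ℝ := (h:ℝ) * T * ((p:ℝ) - 1) with hx
  have hxnonneg : 0 ≤ x := by
    apply mul_nonneg (mul_nonneg (by positivity) hTnonneg)
    have : (2:ℝ) ≤ p := by exact_mod_cast hp2
    linarith
  -- bound on x
  have hxlt : x < ((P:ℝ))⁻¹ ^ 2 := by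
    have hPR : (2:ℝ) ≤ P := by exact_mod_cast hP2
    have hb1 : (p:ℝ) - 1 ≤ (P:ℝ) := by
      have : (p:ℝ) ≤ P := by exact_mod_cast hpP
      linarith
    have hb2 : (h:ℝ) ≤ (P:ℝ) := by
      have : h ≤ P := by omega
      exact_mod_cast this
    have hb3 : x ≤ (P:ℝ) * (2 * ((2:ℝ)^(4*P))⁻¹) * (P:ℝ) := by
      apply mul_le_mul _ hb1 (by linarith) (by positivity)
      exact mul_le_mul hb2 hTle hTnonneg (by linarith)
    have hkey : (P:ℝ) * (2 * ((2:ℝ)^(4*P))⁻¹) * (P:ℝ) < ((P:ℝ))⁻¹ ^ 2 := by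
      have hPpos : (0:ℝ) < P := by positivity
      have h16 : ((2:ℝ)^(4*P)) = (16:ℝ)^P := by rw [pow_mul]; norm_num
      have hR : 2 * (P:ℝ)^4 < (16:ℝ)^P := by exact_mod_cast pow_ineq P hP2
      rw [inv_pow, h16]
      rw [show (P:ℝ) * (2 * ((16:ℝ)^P)⁻¹) * P = (2 * P^2) / 16^P by ring,
        show (((P:ℝ)^2))⁻¹ = 1 / P^2 by ring]
      rw [div_lt_div_iff₀ (by positivity) (by positivity)]
      calc 2*(P:ℝ)^2 * P^2 = 2 * P^4 := by ring
        _ < 16^P := hR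
        _ = 1 * 16^P := by ring
    linarith
  -- conclude
  have hPR : (2:ℝ) ≤ P := by exact_mod_cast hP2
  have hq : ((P:ℝ))⁻¹ ^ 2 ≤ 1/4 := by
    have h1 : (P:ℝ)⁻¹ ≤ (2:ℝ)⁻¹ := inv_anti₀ (by norm_num) hPR
    calc ((P:ℝ))⁻¹^2 ≤ ((2:ℝ)⁻¹)^2 := pow_le_pow_left₀ (by positivity) h1 2
      _ = 1/4 := by norm_num
  have hround : round ((c:ℝ) + x) = (c:ℤ) := by
    rw [round_natCast_add]
    have h2 : round x = 0 := round_eq_zero_iff.mpr ⟨by linarith, by linarith⟩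
    rw [h2, add_zero]
  have hfin : distToInt ((c:ℝ) + x) = x := by
    unfold distToInt
    rw [hround]
    push_cast
    rw [add_sub_cancel_left]
    exact abs_of_nonneg hxnonneg
  rw [hexpr, hfin]
  exact hxlt
end
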